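/- Every injective necklace morphism f: T = Δ^{n_1} ∨ ⋯ ∨ Δ^{n_k} → T' = Δ^{m_1} ∨ ⋯ ∨ Δ^{m_l} with dim(T') − dim(T) = 1 is of exactly one of two kinds: (ia) T has one fewer vertex than T' (forcing k = l) and f = id ∨ d^j ∨ id where d^j: Δ^{n_i} → Δ^{m_i} is the simplicial j-th coface morphism for some i with n_i + 1 = m_i and some j ∈ {1,…,n_i − 1}; or (ib) T and T' have the same number of vertices (forcing l = k + 1) and f = id ∨ W^j ∨ id where W^j: Δ^{n_i} ∨ Δ^{n_{i+1}} → Δ^{m_i} with n_i + n_{i+1} = m_i is the injective map whose image in Δ^{m_i} is the wedge of the two subsimplicial sets corresponding to the j-th term of the Alexander–Whitney diagonal of the top simplex of Δ^{m_i}. Moreover, for every necklace T of dimension n there are exactly n morphisms of type (ia) with target T and exactly n morphisms of type (ib) with target T. -/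

import Mathlib

/-! Necklaces, modeled skeletally: a necklace `Δ^{n_1} ∨ ⋯ ∨ Δ^{n_k}` (all `n_i ≥ 1`) is
recorded by its total number of vertices `N + 1` together with the set `J` of joint
vertices; the beads are the intervals between consecutive joints.  A morphism of necklaces
is a monotone vertex map preserving the first and last vertices and sending each bead into
a bead. -/

structure Necklace where
  N : ℕ
  pos : 0 < N
  J : Finset (Fin (N + 1))
  zero_mem : (0 : Fin (N + 1)) ∈ J
  last_mem : Fin.last N ∈ J

namespace Necklace

def beads (T : Necklace) : ℕ := T.J.card - 1

def dim (T : Necklace) : ℕ := T.N + 1 - T.J.card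

def IsBead (T : Necklace) (a b : Fin (T.N + 1)) : Prop :=
  a ∈ T.J ∧ b ∈ T.J ∧ a < b ∧ ∀ c ∈ T.J, c ≤ a ∨ b ≤ c

structure Hom (T T' : Necklace) where
  f : Fin (T.N + 1) →o Fin (T'.N + 1)
  map_zero : f 0 = 0
  map_last : f (Fin.last T.N) = Fin.last T'.N
  map_bead : ∀ a b : Fin (T.N + 1), T.IsBead a b → ∃ a' b' : Fin (T'.N + 1),
      T'.IsBead a' b' ∧ ∀ v, a ≤ v → v ≤ b → a' ≤ f v ∧ f v ≤ b'

/-- Type (ia): `f = id ∨ d^j ∨ id`, where `d^j : Δ^{n_i} → Δ^{m_i}` (`m_i = n_i + 1`) is an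
inner coface morphism of one bead: equivalently, `f` is the monotone injection skipping
exactly one vertex `u` of the target which is interior to its bead (not a joint), and it
identifies the joints of the source with the joints of the target.  Such a morphism is
injective, has one fewer vertex in the source than in the target, the same number of beads,
and raises dimension by one. -/
def TypeIa {T T' : Necklace} (φ : Hom T T') : Prop :=
  Function.Injective φ.f ∧
  T'.dim = T.dim + 1 ∧
  T'.N = T.N + 1 ∧
  T'.J = T.J.image φ.f ∧
  ∃ u : Fin (T'.N + 1), u ∉ T'.J ∧
    ∀ v : Fin (T.N + 1),
      (φ.f v : ℕ) = if (v : ℕ) < (u : ℕ) then (v : ℕ) else (v : ℕ) + 1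

/-- Type (ib): `f = id ∨ W^j ∨ id`, where
`W^j : Δ^{n_i} ∨ Δ^{n_{i+1}} → Δ^{m_i}` (`n_i + n_{i+1} = m_i`) is the injective morphism
whose image is the wedge of the two subsimplicial sets appearing in the `j`-th term of the
Alexander–Whitney diagonal of the top simplex of `Δ^{m_i}`: equivalently, `f` is the
identity on vertices and the source has exactly one extra joint `u` (interior to a bead of
the target).  Such a morphism is injective, source and target have the same number of
vertices, the target has one bead less, and the dimension is raised by one. -/
def TypeIb {T T' : Necklace} (φ : Hom T T') : Prop :=
  Function.Injective φ.f ∧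
  T'.dim = T.dim + 1 ∧
  T'.N = T.N ∧
  (∀ v : Fin (T.N + 1), (φ.f v : ℕ) = (v : ℕ)) ∧
  ∃ u : Fin (T'.N + 1), u ∉ T'.J ∧
    T.J.image Fin.val = insert (u : ℕ) (T'.J.image Fin.val)

end Necklace

/-! An injective necklace morphism `f : T → T'` is strictly monotone on vertices, and since it
maps beads into beads it sends non-joints to non-joints and hits every joint of `T'`; thus
`T'.J ⊆ f(T.J)`. So `f` can only add vertices and forget joints, and as the dimension is the
number of vertices minus the number of joints, exactly one of these happens, and once: either
`T'` has one more vertex (a strictly monotone `Fin (n + 1) → Fin (n + 2)` is a `succAbove`,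
i.e. a coface) and the joints correspond, or `f` is the identity on vertices and forgets one
joint. Either way the morphism is determined by a non-joint vertex of `T'`, and each of the
`dim T'` non-joints arises, in both ways. -/

namespace Fin

lemma val_apply_eq_of_strictMono {n m : ℕ} {f : Fin n → Fin m} (hf : StrictMono f)
    (hmn : m ≤ n) (i : Fin n) : (f i : ℕ) = i := by
  have hcard : Fintype.card (Fin n) = Fintype.card (Fin m) := by
    simpa using hmn.antisymm' (by simpa using Fintype.card_le_of_injective f hf.injective)
  have hsurj : Function.Surjective f :=
    ((Fintype.bijective_iff_injective_and_card f).mpr ⟨hf.injective, hcard⟩).2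
  exact coe_orderIso_apply (hf.orderIsoOfSurjective f hsurj) i

lemma val_succAbove_eq_ite {n : ℕ} (p : Fin (n + 1)) (i : Fin n) :
    (p.succAbove i : ℕ) = if (i : ℕ) < p then (i : ℕ) else (i : ℕ) + 1 := by
  unfold succAbove
  split_ifs <;> simp_all [lt_def]

lemma exists_eq_succAbove_of_strictMono {n : ℕ} {f : Fin n → Fin (n + 1)}
    (hf : StrictMono f) : ∃ p : Fin (n + 1), f = p.succAbove := by
  obtain ⟨p, hp⟩ : ∃ p, p ∉ Set.range f := by
    by_contra! h
    simpa using Fintype.card_le_of_surjective f h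
  choose g hg using fun i => exists_succAbove_eq fun e : f i = p => hp ⟨i, e⟩
  have hg_mono : StrictMono g := fun i j hij => by
    simpa only [← hg, succAbove_lt_succAbove_iff] using hf hij
  refine ⟨p, funext fun i => ?_⟩
  rw [← hg, Fin.ext (val_apply_eq_of_strictMono hg_mono le_rfl i)]

lemma exists_eq_or_lt_lt_succ {α : Type*} [LinearOrder α] {n : ℕ} (f : Fin (n + 1) → α)
    {c : α} (h0 : f 0 ≤ c) (hlast : c ≤ f (last n)) :
    (∃ i, f i = c) ∨ ∃ i : Fin n, f i.castSucc < c ∧ c < f i.succ := by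
  induction n with
  | zero => exact Or.inl ⟨0, h0.antisymm (by simpa using hlast)⟩
  | succ n ih =>
    by_cases h : c ≤ f (last n).castSucc
    · rcases ih (f ∘ castSucc) h0 h with ⟨i, hi⟩ | ⟨i, hi⟩
      · exact Or.inl ⟨_, hi⟩
      · exact Or.inr ⟨i.castSucc, hi⟩
    · rcases hlast.lt_or_eq with hlt | heq
      · exact Or.inr ⟨last n, not_le.mp h, by simpa using hlt⟩
      · exact Or.inl ⟨_, heq.symm⟩

lemma exists_val_apply_eq_ite_of_strictMono {n m : ℕ} {f : Fin n → Fin m} (hf : StrictMono f)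
    (hm : m = n + 1) :
    ∃ p : Fin m, ∀ i, (f i : ℕ) = if (i : ℕ) < p then (i : ℕ) else (i : ℕ) + 1 := by
  subst hm
  obtain ⟨p, rfl⟩ := exists_eq_succAbove_of_strictMono hf
  exact ⟨p, val_succAbove_eq_ite p⟩

lemma eq_of_val_apply_eq_ite {n m : ℕ} {f : Fin (n + 1) → Fin (m + 1)}
    (hlast : f (last n) = last m) {p q : Fin (m + 1)}
    (hp : ∀ i, (f i : ℕ) = if (i : ℕ) < p then (i : ℕ) else (i : ℕ) + 1)
    (hq : ∀ i, (f i : ℕ) = if (i : ℕ) < q then (i : ℕ) else (i : ℕ) + 1) : p = q := by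
  by_contra hne
  wlog hpq : p < q generalizing p q
  · exact this hq hp (Ne.symm hne) ((not_lt.mp hpq).lt_of_ne (Ne.symm hne))
  rw [lt_def] at hpq
  have hm := hp (last n)
  rw [hlast, val_last, val_last] at hm
  -- `f (last n) = last m` makes `p` a vertex of the source, where the two formulas disagree.
  have hpn : (p : ℕ) < n + 1 := by have := q.isLt; split_ifs at hm <;> omega
  have h₁ := hp ⟨p, hpn⟩
  have h₂ := hq ⟨p, hpn⟩
  simp only [lt_irrefl, if_false, hpq, if_true] at h₁ h₂
  omega

end Fin

namespace Necklace

variable {T T' : Necklace}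

lemma IsBead.notMem_J {a b c : Fin (T.N + 1)} (h : T.IsBead a b) (hac : a < c) (hcb : c < b) :
    c ∉ T.J :=
  fun hc => (h.2.2.2 c hc).elim hac.not_ge hcb.not_ge

lemma exists_isBead_of_lt {v w : Fin (T.N + 1)} (hvw : v < w)
    (hJ : ∀ c ∈ T.J, c ≤ v ∨ w ≤ c) : ∃ a b, T.IsBead a b ∧ a ≤ v ∧ w ≤ b := by
  have hA : (T.J.filter (· ≤ v)).Nonempty := ⟨0, by simp [T.zero_mem]⟩
  have hB : (T.J.filter (w ≤ ·)).Nonempty := ⟨Fin.last _, by simp [T.last_mem, Fin.le_last]⟩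
  obtain ⟨haJ, hav⟩ := Finset.mem_filter.mp (Finset.max'_mem _ hA)
  obtain ⟨hbJ, hwb⟩ := Finset.mem_filter.mp (Finset.min'_mem _ hB)
  refine ⟨_, _, ⟨haJ, hbJ, hav.trans_lt (hvw.trans_le hwb), fun c hc => ?_⟩, hav, hwb⟩
  exact (hJ c hc).imp (fun h => Finset.le_max' _ c (by simp [hc, h]))
    (fun h => Finset.min'_le _ c (by simp [hc, h]))

lemma zero_lt_val_and_val_lt_of_notMem_J {u : Fin (T.N + 1)} (hu : u ∉ T.J) :
    0 < (u : ℕ) ∧ (u : ℕ) < T.N := by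
  have h0 : u ≠ 0 := by rintro rfl; exact hu T.zero_mem
  have hl : u ≠ Fin.last T.N := by rintro rfl; exact hu T.last_mem
  rw [Ne, Fin.ext_iff] at h0 hl
  simp only [Fin.val_zero, Fin.val_last] at h0 hl
  omega

lemma dim_add_card_J (T : Necklace) : T.dim + T.J.card = T.N + 1 :=
  Nat.sub_add_cancel (by simpa using T.J.card_le_univ)

namespace Hom

variable (φ : Hom T T')

lemma notMem_J_of_apply_lt_of_lt_apply {v w : Fin (T.N + 1)} (hJ : ∀ c ∈ T.J, c ≤ v ∨ w ≤ c)
    {c : Fin (T'.N + 1)} (hvc : φ.f v < c) (hcw : c < φ.f w) : c ∉ T'.J := by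
  have hvw : v < w := φ.f.monotone.reflect_lt (hvc.trans hcw)
  obtain ⟨a, b, hab, hav, hwb⟩ := exists_isBead_of_lt hvw hJ
  obtain ⟨a', b', hab', hφ⟩ := φ.map_bead a b hab
  exact hab'.notMem_J ((hφ v hav (hvw.le.trans hwb)).1.trans_lt hvc)
    (hcw.trans_le (hφ w (hav.trans hvw.le) hwb).2)

lemma exists_apply_eq_of_mem_J {c : Fin (T'.N + 1)} (hc : c ∈ T'.J) : ∃ v, φ.f v = c := by
  refine (Fin.exists_eq_or_lt_lt_succ φ.f (by simp [φ.map_zero])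
    (by simp [φ.map_last, Fin.le_last])).resolve_right ?_
  rintro ⟨i, hi, hi'⟩
  exact φ.notMem_J_of_apply_lt_of_lt_apply
    (fun d _ => (le_or_gt d i.castSucc).imp_right Fin.castSucc_lt_iff_succ_le.mp) hi hi' hc

variable {φ}

lemma mem_J_of_apply_mem_J (hinj : Function.Injective φ.f) {v : Fin (T.N + 1)}
    (hv : φ.f v ∈ T'.J) : v ∈ T.J := by
  by_contra h
  have hv' := zero_lt_val_and_val_lt_of_notMem_J h
  have hsm := φ.f.monotone.strictMono_of_injective hinj
  refine φ.notMem_J_of_apply_lt_of_lt_apply (v := ⟨v - 1, by omega⟩) (w := ⟨v + 1, by omega⟩)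
    (fun c hc => ?_) (hsm (Fin.lt_def.mpr (show (v : ℕ) - 1 < v by omega)))
    (hsm (Fin.lt_def.mpr (show (v : ℕ) < v + 1 by omega))) hv
  have hcv : c ≠ v := by rintro rfl; exact h hc
  rw [Ne, Fin.ext_iff] at hcv
  simp only [Fin.le_def]
  omega

lemma J_subset_image (hinj : Function.Injective φ.f) : T'.J ⊆ T.J.image φ.f := by
  intro c hc
  obtain ⟨v, rfl⟩ := φ.exists_apply_eq_of_mem_J hc
  exact Finset.mem_image_of_mem _ (mem_J_of_apply_mem_J hinj hc)

end Hom

section Classification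

variable {φ : Hom T T'}

lemma typeIa_of_N_eq_succ (hinj : Function.Injective φ.f) (hdim : T'.dim = T.dim + 1)
    (hN : T'.N = T.N + 1) : TypeIa φ := by
  have hcard : T'.J.card = T.J.card := by
    have := T.dim_add_card_J; have := T'.dim_add_card_J; omega
  have hJ : T'.J = T.J.image φ.f :=
    Finset.eq_of_subset_of_card_le (Hom.J_subset_image hinj) (Finset.card_image_le.trans hcard.ge)
  obtain ⟨u, hu⟩ := Fin.exists_val_apply_eq_ite_of_strictMono
    (φ.f.monotone.strictMono_of_injective hinj) (by omega)
  refine ⟨hinj, hdim, hN, hJ, u, ?_, hu⟩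
  rw [hJ, Finset.mem_image]
  rintro ⟨v, -, hv⟩
  have := hu v
  rw [hv] at this
  split_ifs at this <;> omega

lemma typeIb_of_N_eq (hinj : Function.Injective φ.f) (hdim : T'.dim = T.dim + 1)
    (hN : T'.N = T.N) : TypeIb φ := by
  have hid : ∀ v, (φ.f v : ℕ) = v :=
    Fin.val_apply_eq_of_strictMono (φ.f.monotone.strictMono_of_injective hinj) (by omega)
  have hsub : T'.J.image Fin.val ⊆ T.J.image Fin.val := by
    intro n hn
    obtain ⟨c, hc, rfl⟩ := Finset.mem_image.mp hn
    obtain ⟨v, hv, rfl⟩ := Finset.mem_image.mp (Hom.J_subset_image hinj hc)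
    exact Finset.mem_image.mpr ⟨v, hv, (hid v).symm⟩
  have hcard : (T'.J.image Fin.val).card + 1 = (T.J.image Fin.val).card := by
    rw [Finset.card_image_of_injective _ Fin.val_injective,
      Finset.card_image_of_injective _ Fin.val_injective]
    have := T.dim_add_card_J; have := T'.dim_add_card_J; omega
  obtain ⟨n, hn, hins⟩ := Finset.exists_eq_insert_iff.mpr ⟨hsub, hcard⟩
  have hn_lt : n < T'.N + 1 := by
    obtain ⟨v, -, rfl⟩ := Finset.mem_image.mp (hins ▸ Finset.mem_insert_self n _)
    omega
  exact ⟨hinj, hdim, hN, hid, ⟨n, hn_lt⟩, fun h => hn (Finset.mem_image_of_mem _ h), hins.symm⟩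

lemma typeIa_or_typeIb (hinj : Function.Injective φ.f) (hdim : T'.dim = T.dim + 1) :
    TypeIa φ ∨ TypeIb φ := by
  have hN : T.N ≤ T'.N := by simpa using Fintype.card_le_of_injective _ hinj
  have hJ : T'.J.card ≤ T.J.card :=
    (Finset.card_le_card (Hom.J_subset_image hinj)).trans Finset.card_image_le
  have := T.dim_add_card_J
  have := T'.dim_add_card_J
  rcases (by omega : T'.N = T.N + 1 ∨ T'.N = T.N) with hN | hN
  · exact Or.inl (typeIa_of_N_eq_succ hinj hdim hN)
  · exact Or.inr (typeIb_of_N_eq hinj hdim hN)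

lemma not_typeIa_and_typeIb : ¬ (TypeIa φ ∧ TypeIb φ) :=
  fun ⟨ha, hb⟩ => by have := ha.2.2.1; have := hb.2.2.1; omega

end Classification

section InnerCoface

variable (T) in
def cofaceMap (u : Fin (T.N + 1)) : Fin (T.N - 1 + 1) ↪o Fin (T.N + 1) :=
  (Fin.castOrderIso (Nat.sub_add_cancel T.pos)).toOrderEmbedding.trans (Fin.succAboveOrderEmb u)

lemma val_cofaceMap (u : Fin (T.N + 1)) (v : Fin (T.N - 1 + 1)) :
    (T.cofaceMap u v : ℕ) = if (v : ℕ) < u then (v : ℕ) else (v : ℕ) + 1 :=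
  Fin.val_succAbove_eq_ite u _

lemma exists_cofaceMap_eq {u c : Fin (T.N + 1)} (hc : c ≠ u) : ∃ v, T.cofaceMap u v = c := by
  obtain ⟨z, rfl⟩ := Fin.exists_succAbove_eq hc
  exact ⟨Fin.cast (Nat.sub_add_cancel T.pos).symm z, by simp [cofaceMap]⟩

lemma cofaceMap_zero {u : Fin (T.N + 1)} (hu : u ∉ T.J) : T.cofaceMap u 0 = 0 := by
  have := zero_lt_val_and_val_lt_of_notMem_J hu
  ext
  rw [val_cofaceMap, if_pos (by simpa using this.1)]
  rfl

lemma cofaceMap_last {u : Fin (T.N + 1)} (hu : u ∉ T.J) :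
    T.cofaceMap u (Fin.last _) = Fin.last _ := by
  have := zero_lt_val_and_val_lt_of_notMem_J hu
  ext
  rw [val_cofaceMap, if_neg (by simp; omega)]
  simp; omega

variable (T) in
def eraseVertex (u : Fin (T.N + 1)) (hu : u ∉ T.J) : Necklace where
  N := T.N - 1
  pos := by have := zero_lt_val_and_val_lt_of_notMem_J hu; omega
  J := Finset.univ.filter (T.cofaceMap u · ∈ T.J)
  zero_mem := by simpa [cofaceMap_zero hu] using T.zero_mem
  last_mem := by simpa [cofaceMap_last hu] using T.last_mem

lemma N_eraseVertex {u : Fin (T.N + 1)} (hu : u ∉ T.J) : (T.eraseVertex u hu).N = T.N - 1 :=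
  rfl

lemma mem_eraseVertex_J {u : Fin (T.N + 1)} {hu : u ∉ T.J} {v : Fin (T.N - 1 + 1)} :
    v ∈ (T.eraseVertex u hu).J ↔ T.cofaceMap u v ∈ T.J :=
  Finset.mem_filter_univ _

lemma J_eq_image_eraseVertex_J (u : Fin (T.N + 1)) (hu : u ∉ T.J) :
    T.J = (T.eraseVertex u hu).J.image (T.cofaceMap u) := by
  ext c
  refine ⟨fun hc => ?_, fun hc => ?_⟩
  · obtain ⟨v, rfl⟩ := exists_cofaceMap_eq (show c ≠ u by rintro rfl; exact hu hc)
    exact Finset.mem_image_of_mem _ (mem_eraseVertex_J.mpr hc)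
  · obtain ⟨v, hv, rfl⟩ := Finset.mem_image.mp hc
    exact mem_eraseVertex_J.mp hv

variable (T) in
def innerCoface (u : Fin (T.N + 1)) (hu : u ∉ T.J) : Hom (T.eraseVertex u hu) T where
  f := (T.cofaceMap u).toOrderHom
  map_zero := cofaceMap_zero hu
  map_last := cofaceMap_last hu
  map_bead a b hab := by
    have hle {v w} : v ≤ w → T.cofaceMap u v ≤ T.cofaceMap u w := (T.cofaceMap u).le_iff_le.mpr
    refine ⟨_, _, ⟨mem_eraseVertex_J.mp hab.1, mem_eraseVertex_J.mp hab.2.1,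
      (T.cofaceMap u).lt_iff_lt.mpr hab.2.2.1, fun c hc => ?_⟩, fun v hav hvb => ⟨hle hav, hle hvb⟩⟩
    rw [T.J_eq_image_eraseVertex_J u hu] at hc
    obtain ⟨w, hw, rfl⟩ := Finset.mem_image.mp hc
    exact (hab.2.2.2 w hw).imp hle hle

lemma typeIa_innerCoface (u : Fin (T.N + 1)) (hu : u ∉ T.J) : TypeIa (T.innerCoface u hu) := by
  have hJ := T.J_eq_image_eraseVertex_J u hu
  have hcard : T.J.card = (T.eraseVertex u hu).J.card := by
    rw [hJ]; exact Finset.card_image_of_injective _ (T.cofaceMap u).injective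
  have := T.dim_add_card_J
  have := (T.eraseVertex u hu).dim_add_card_J
  have := (zero_lt_val_and_val_lt_of_notMem_J hu).2
  have := N_eraseVertex hu
  exact ⟨(T.cofaceMap u).injective, by omega, by omega, hJ, u, hu, val_cofaceMap u⟩

end InnerCoface

section WedgeInclusion

variable (T) in
def insertJoint (u : Fin (T.N + 1)) : Necklace where
  N := T.N
  pos := T.pos
  J := insert u T.J
  zero_mem := Finset.mem_insert_of_mem T.zero_mem
  last_mem := Finset.mem_insert_of_mem T.last_mem

variable (T) in
def wedgeInclusion (u : Fin (T.N + 1)) : Hom (T.insertJoint u) T where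
  f := OrderHom.id
  map_zero := rfl
  map_last := rfl
  map_bead a b hab := by
    obtain ⟨a', b', hab', ha', hb'⟩ :=
      exists_isBead_of_lt (T := T) hab.2.2.1 fun c hc => hab.2.2.2 c (Finset.mem_insert_of_mem hc)
    exact ⟨a', b', hab', fun v hav hvb => ⟨ha'.trans hav, hvb.trans hb'⟩⟩

lemma typeIb_wedgeInclusion (u : Fin (T.N + 1)) (hu : u ∉ T.J) :
    TypeIb (T.wedgeInclusion u) := by
  have hcard : (T.insertJoint u).J.card = T.J.card + 1 := Finset.card_insert_of_notMem hu
  have := T.dim_add_card_J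
  have := (T.insertJoint u).dim_add_card_J
  have : (T.insertJoint u).N = T.N := rfl
  exact ⟨Function.injective_id, by omega, rfl, fun _ => rfl, u, hu, Finset.image_insert _ _ _⟩

end WedgeInclusion

section Counting

lemma sigma_hom_ext {S₁ S₂ : Necklace} {φ₁ : Hom S₁ T} {φ₂ : Hom S₂ T} (hN : S₁.N = S₂.N)
    (hJ : ∀ v : Fin (S₁.N + 1), v ∈ S₁.J ↔ Fin.cast (by rw [hN]) v ∈ S₂.J)
    (hf : ∀ v : Fin (S₁.N + 1), (φ₁.f v : ℕ) = φ₂.f (Fin.cast (by rw [hN]) v)) :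
    (⟨S₁, φ₁⟩ : Σ S, Hom S T) = ⟨S₂, φ₂⟩ := by
  obtain ⟨N, _, J, _, _⟩ := S₁
  obtain ⟨N', _, J', _, _⟩ := S₂
  obtain rfl : N = N' := hN
  obtain rfl : J = J' := Finset.ext fun v => by simpa using hJ v
  obtain ⟨f, _, _, _⟩ := φ₁
  obtain ⟨f', _, _, _⟩ := φ₂
  obtain rfl : f = f' := OrderHom.ext _ _ (funext fun v => Fin.ext (by simpa using hf v))
  rfl

lemma exists_eq_innerCoface_of_typeIa {S : Necklace} {φ : Hom S T} (hφ : TypeIa φ) :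
    ∃ u, ∃ hu : u ∉ T.J, (⟨_, T.innerCoface u hu⟩ : Σ S, Hom S T) = ⟨S, φ⟩ := by
  obtain ⟨hinj, -, hN, hJ, u, hu, hval⟩ := hφ
  have hcoface : ∀ v, T.cofaceMap u v = φ.f (Fin.cast (by omega) v) :=
    fun v => Fin.ext (by rw [val_cofaceMap, hval]; rfl)
  refine ⟨u, hu, sigma_hom_ext (by rw [N_eraseVertex]; omega) (fun v : Fin (T.N - 1 + 1) => ?_)
    fun v : Fin (T.N - 1 + 1) => congrArg Fin.val (hcoface v)⟩
  refine mem_eraseVertex_J.trans ?_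
  rw [hcoface, hJ, hinj.mem_finset_image]
  exact Iff.rfl

lemma exists_eq_wedgeInclusion_of_typeIb {S : Necklace} {φ : Hom S T} (hφ : TypeIb φ) :
    ∃ u, u ∉ T.J ∧ (⟨_, T.wedgeInclusion u⟩ : Σ S, Hom S T) = ⟨S, φ⟩ := by
  obtain ⟨-, -, hN, hval, u, hu, hJ⟩ := hφ
  refine ⟨u, hu, sigma_hom_ext hN (fun v : Fin (T.N + 1) => ?_)
    fun v : Fin (T.N + 1) => by rw [hval]; rfl⟩
  show v ∈ insert u T.J ↔ Fin.cast (by rw [hN]) v ∈ S.J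
  rw [← Fin.val_injective.mem_finset_image (s := S.J), Fin.val_cast, hJ, Finset.mem_insert,
    Finset.mem_insert, Fin.val_injective.mem_finset_image, Fin.val_inj]

variable (T)

lemma bijective_innerCoface :
    Function.Bijective fun u : {u // u ∉ T.J} =>
      (⟨⟨_, T.innerCoface u.1 u.2⟩, typeIa_innerCoface u.1 u.2⟩ :
        {p : Σ S, Hom S T // TypeIa p.2}) := by
  refine ⟨fun ⟨u₁, hu₁⟩ ⟨u₂, hu₂⟩ h => Subtype.ext ?_, fun ⟨⟨S, φ⟩, hφ⟩ => ?_⟩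
  · have key : ∀ p : {p : Σ S, Hom S T // TypeIa p.2},
        p = ⟨⟨_, T.innerCoface u₁ hu₁⟩, typeIa_innerCoface u₁ hu₁⟩ →
          ∀ v, (p.1.2.f v : ℕ) = if (v : ℕ) < u₁ then (v : ℕ) else (v : ℕ) + 1 := by
      rintro _ rfl
      exact val_cofaceMap u₁
    exact Fin.eq_of_val_apply_eq_ite (T.innerCoface u₂ hu₂).map_last (key _ h.symm)
      (val_cofaceMap u₂)
  · obtain ⟨u, hu, h⟩ := exists_eq_innerCoface_of_typeIa hφ
    exact ⟨⟨u, hu⟩, Subtype.ext h⟩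

lemma bijective_wedgeInclusion :
    Function.Bijective fun u : {u // u ∉ T.J} =>
      (⟨⟨_, T.wedgeInclusion u.1⟩, typeIb_wedgeInclusion u.1 u.2⟩ :
        {p : Σ S, Hom S T // TypeIb p.2}) := by
  refine ⟨fun ⟨u₁, hu₁⟩ ⟨u₂, hu₂⟩ h => Subtype.ext ?_, fun ⟨⟨S, φ⟩, hφ⟩ => ?_⟩
  · have key : ∀ p : {p : Σ S, Hom S T // TypeIb p.2},
        p = ⟨⟨_, T.wedgeInclusion u₁⟩, typeIb_wedgeInclusion u₁ hu₁⟩ →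
          p.1.1.J.image Fin.val = insert (u₁ : ℕ) (T.J.image Fin.val) := by
      rintro _ rfl
      exact Finset.image_insert _ _ _
    have h₂ : (T.insertJoint u₂).J.image Fin.val = insert (u₂ : ℕ) (T.J.image Fin.val) :=
      Finset.image_insert _ _ _
    rw [key _ h.symm, Finset.insert_inj (mt Fin.val_injective.mem_finset_image.mp hu₁)] at h₂
    exact Fin.ext h₂
  · obtain ⟨u, hu, h⟩ := exists_eq_wedgeInclusion_of_typeIb hφ
    exact ⟨⟨u, hu⟩, Subtype.ext h⟩

lemma card_notMem_J : Nat.card {u // u ∉ T.J} = T.dim := by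
  rw [Nat.card_eq_fintype_card, Fintype.card_subtype_compl, Fintype.card_fin, Fintype.card_coe]
  rfl

end Counting

end Necklace

open Necklace in
theorem injective_codimension_one_necklace_morphisms
    (T' : Necklace) :
    (∀ (T : Necklace) (φ : Hom T T'),
        Function.Injective φ.f → T'.dim = T.dim + 1 →
          (TypeIa φ ∨ TypeIb φ) ∧ ¬ (TypeIa φ ∧ TypeIb φ)) ∧
    Nat.card {p : Σ T : Necklace, Hom T T' // TypeIa p.2} = T'.dim ∧
    Nat.card {p : Σ T : Necklace, Hom T T' // TypeIb p.2} = T'.dim := by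
  refine ⟨fun T φ hinj hdim => ⟨typeIa_or_typeIb hinj hdim, not_typeIa_and_typeIb⟩, ?_, ?_⟩
  · rw [← card_notMem_J, Nat.card_congr (Equiv.ofBijective _ (bijective_innerCoface T'))]
  · rw [← card_notMem_J, Nat.card_congr (Equiv.ofBijective _ (bijective_wedgeInclusion T'))]
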